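/- arXiv:1705.01883 — 3 statements merged into one kernel-verified Lean document; each statement's English description precedes it below -/
import Mathlib

section
/- Let V = {v₁, …, v_k} be a finite set of nonzero vectors in ℝⁿ with all coordinates nonnegative, and let D_V = {a₁v₁ + ⋯ + a_k v_k : aᵢ ∈ ℕ, not all zero}. Call a function f : D_V → ℝ admissible if f(u + w) > max(f(u), f(w)) for all u, w ∈ D_V and the preimage under f of every interval (−∞, x) is finite. For an admissible f, define the f-Ulam set A_f(V) ⊆ D_V by: every v ∈ V lies in A_f(V), and a vector x ∈ D_V with x ∉ V lies in A_f(V) if and only if there is exactly one unordered pair {u, w} with u, w ∈ A_f(V), u ≠ w, f(u) < f(x), f(w) < f(x), and u + w = x. Then for any two admissible functions f₁ and f₂, the sets A_{f₁}(V) and A_{f₂}(V) are equal. -/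
/-- Exactly one unordered pair `{u, w}` of distinct elements of `A` sums to `x`. -/
def UlamUniqueRep {α : Type*} [Add α] (A : Set α) (x : α) : Prop :=
  ∃ u w, u ∈ A ∧ w ∈ A ∧ u ≠ w ∧ u + w = x ∧
    ∀ u' w', u' ∈ A → w' ∈ A → u' ≠ w' → u' + w' = x →
      (u' = u ∧ w' = w) ∨ (u' = w ∧ w' = u)

/-- `A` is the Ulam set with initial set `V`: every element of `V` lies in `A`, and a
vector not in `V` lies in `A` iff exactly one unordered pair of distinct elements of `A`
sums to it. -/
def IsUlamSet {α : Type*} [Add α] (V A : Set α) : Prop :=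
  V ⊆ A ∧ ∀ x, x ∉ V → (x ∈ A ↔ UlamUniqueRep A x)

/-- `A` is the `f`-Ulam set inside the domain `D` with initial set `V`: `A ⊆ D`,
every element of `V` lies in `A`, and an element `x ∈ D` not in `V` lies in `A` iff
exactly one unordered pair of distinct elements of `A`, each `f`-smaller than `x`,
sums to `x`. -/
def IsFUlamSet {α : Type*} [Add α] (D V : Set α) (f : α → ℝ) (A : Set α) : Prop :=
  A ⊆ D ∧ V ⊆ A ∧ ∀ x ∈ D, x ∉ V →
    (x ∈ A ↔ ∃ u w, u ∈ A ∧ w ∈ A ∧ u ≠ w ∧ f u < f x ∧ f w < f x ∧ u + w = x ∧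
      ∀ u' w', u' ∈ A → w' ∈ A → u' ≠ w' → f u' < f x → f w' < f x → u' + w' = x →
        (u' = u ∧ w' = w) ∨ (u' = w ∧ w' = u))

/-!
Since `f (u + w) > max (f u) (f w)` on `D`, every pair of elements of an `f`-Ulam set summing to
`x` is automatically `f`-smaller than `x`; so membership of `x` is the plain Ulam condition, which
only depends on the elements of the set below `x`. An induction along `f₁`, well founded because
its sublevel sets are finite, then shows that any two such sets agree.
-/

section Sublevel

variable {α : Type*} {D : Set α} {f : α → ℝ}

lemma ncard_sublevel_lt_ncard_sublevel (hfin : ∀ t, {y ∈ D | f y < t}.Finite) {x y : α}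
    (hyD : y ∈ D) (hyx : f y < f x) :
    {z ∈ D | f z < f y}.ncard < {z ∈ D | f z < f x}.ncard := by
  refine Set.ncard_lt_ncard ⟨fun z hz => ⟨hz.1, hz.2.trans hyx⟩, fun hsub => ?_⟩ (hfin _)
  exact (hsub ⟨hyD, hyx⟩).2.false

theorem induction_of_finite_sublevels {P : α → Prop} (hfin : ∀ t, {y ∈ D | f y < t}.Finite)
    (step : ∀ x ∈ D, (∀ y ∈ D, f y < f x → P y) → P x) : ∀ x ∈ D, P x := by
  intro x
  induction x using (measure fun x => {y ∈ D | f y < f x}.ncard).wf.induction with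
  | h x ih =>
    exact fun hxD => step x hxD fun y hyD hyx =>
      ih y (ncard_sublevel_lt_ncard_sublevel hfin hyD hyx) hyD

end Sublevel

section Ulam

variable {α : Type*} [Add α]

lemma ulamUniqueRep_congr {A B : Set α} {x : α} (hBA : B ⊆ A)
    (hsum : ∀ u ∈ A, ∀ w ∈ A, u + w = x → u ∈ B ∧ w ∈ B) :
    UlamUniqueRep B x ↔ UlamUniqueRep A x := by
  constructor
  · rintro ⟨u, w, hu, hw, hne, hx, huniq⟩
    refine ⟨u, w, hBA hu, hBA hw, hne, hx, fun u' w' hu' hw' hne' hx' => ?_⟩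
    obtain ⟨hu'B, hw'B⟩ := hsum u' hu' w' hw' hx'
    exact huniq u' w' hu'B hw'B hne' hx'
  · rintro ⟨u, w, hu, hw, hne, hx, huniq⟩
    obtain ⟨huB, hwB⟩ := hsum u hu w hw hx
    exact ⟨u, w, huB, hwB, hne, hx, fun u' w' hu' hw' => huniq u' w' (hBA hu') (hBA hw')⟩

variable {D V A : Set α} {f : α → ℝ}

lemma ulamUniqueRep_sublevel_iff (hf : ∀ u ∈ D, ∀ w ∈ D, max (f u) (f w) < f (u + w))
    (hA : A ⊆ D) {x : α} : UlamUniqueRep {y ∈ A | f y < f x} x ↔ UlamUniqueRep A x :=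
  ulamUniqueRep_congr (Set.sep_subset _ _) fun u hu w hw hx => by
    have hlt := hx ▸ hf u (hA hu) w (hA hw)
    exact ⟨⟨hu, (le_max_left _ _).trans_lt hlt⟩, ⟨hw, (le_max_right _ _).trans_lt hlt⟩⟩

lemma IsFUlamSet.mem_iff_sublevel (h : IsFUlamSet D V f A) {x : α} (hxD : x ∈ D)
    (hxV : x ∉ V) : x ∈ A ↔ UlamUniqueRep {y ∈ A | f y < f x} x := by
  rw [h.2.2 x hxD hxV]
  constructor
  · rintro ⟨u, w, hu, hw, hne, hfu, hfw, hx, huniq⟩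
    exact ⟨u, w, ⟨hu, hfu⟩, ⟨hw, hfw⟩, hne, hx,
      fun u' w' hu' hw' hne' hx' => huniq u' w' hu'.1 hw'.1 hne' hu'.2 hw'.2 hx'⟩
  · rintro ⟨u, w, hu, hw, hne, hx, huniq⟩
    exact ⟨u, w, hu.1, hw.1, hne, hu.2, hw.2, hx,
      fun u' w' hu' hw' hne' hfu' hfw' => huniq u' w' ⟨hu', hfu'⟩ ⟨hw', hfw'⟩ hne'⟩

lemma IsFUlamSet.mem_iff_ulamUniqueRep (hf : ∀ u ∈ D, ∀ w ∈ D, max (f u) (f w) < f (u + w))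
    (h : IsFUlamSet D V f A) {x : α} (hxD : x ∈ D) (hxV : x ∉ V) :
    x ∈ A ↔ UlamUniqueRep A x :=
  (h.mem_iff_sublevel hxD hxV).trans (ulamUniqueRep_sublevel_iff hf h.1)

lemma IsFUlamSet.mem_iff_mem_of_sublevel {A₁ A₂ : Set α} {f₁ f₂ : α → ℝ}
    (hf₁ : ∀ u ∈ D, ∀ w ∈ D, max (f₁ u) (f₁ w) < f₁ (u + w))
    (hf₂ : ∀ u ∈ D, ∀ w ∈ D, max (f₂ u) (f₂ w) < f₂ (u + w))
    (h₁ : IsFUlamSet D V f₁ A₁) (h₂ : IsFUlamSet D V f₂ A₂) {x : α} (hxD : x ∈ D)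
    (ih : ∀ y ∈ D, f₁ y < f₁ x → (y ∈ A₁ ↔ y ∈ A₂)) : x ∈ A₁ ↔ x ∈ A₂ := by
  by_cases hxV : x ∈ V
  · exact iff_of_true (h₁.2.1 hxV) (h₂.2.1 hxV)
  have hbelow : {y ∈ A₁ | f₁ y < f₁ x} = {y ∈ A₂ | f₁ y < f₁ x} := by
    ext y
    exact ⟨fun ⟨hy, hyx⟩ => ⟨(ih y (h₁.1 hy) hyx).1 hy, hyx⟩,
      fun ⟨hy, hyx⟩ => ⟨(ih y (h₂.1 hy) hyx).2 hy, hyx⟩⟩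
  rw [h₁.mem_iff_sublevel hxD hxV, hbelow, ulamUniqueRep_sublevel_iff hf₁ h₂.1,
    h₂.mem_iff_ulamUniqueRep hf₂ hxD hxV]

end Ulam

theorem stmt_5_general {n k : ℕ} (v : Fin k → (Fin n → ℝ))
    (D : Set (Fin n → ℝ))
    (f₁ f₂ : (Fin n → ℝ) → ℝ)
    (hadm₁ : (∀ u ∈ D, ∀ w ∈ D, max (f₁ u) (f₁ w) < f₁ (u + w)) ∧
      ∀ x : ℝ, {y ∈ D | f₁ y < x}.Finite)
    (hadm₂ : (∀ u ∈ D, ∀ w ∈ D, max (f₂ u) (f₂ w) < f₂ (u + w)) ∧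
      ∀ x : ℝ, {y ∈ D | f₂ y < x}.Finite)
    (A₁ A₂ : Set (Fin n → ℝ))
    (h₁ : IsFUlamSet D (Set.range v) f₁ A₁)
    (h₂ : IsFUlamSet D (Set.range v) f₂ A₂) :
    A₁ = A₂ := by
  have hagree : ∀ x ∈ D, x ∈ A₁ ↔ x ∈ A₂ :=
    induction_of_finite_sublevels hadm₁.2 fun _ hxD ih =>
      IsFUlamSet.mem_iff_mem_of_sublevel hadm₁.1 hadm₂.1 h₁ h₂ hxD ih
  ext x
  by_cases hxD : x ∈ D
  · exact hagree x hxD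
  · exact iff_of_false (fun hx => hxD (h₁.1 hx)) (fun hx => hxD (h₂.1 hx))

theorem stmt_5 {n k : ℕ} (v : Fin k → (Fin n → ℝ))
    (hv0 : ∀ i, v i ≠ 0) (hvnn : ∀ i j, 0 ≤ v i j)
    (D : Set (Fin n → ℝ))
    (hD : D = {x | ∃ a : Fin k → ℕ, a ≠ 0 ∧ x = ∑ i, a i • v i})
    (f₁ f₂ : (Fin n → ℝ) → ℝ)
    (hadm₁ : (∀ u ∈ D, ∀ w ∈ D, max (f₁ u) (f₁ w) < f₁ (u + w)) ∧
      ∀ x : ℝ, {y ∈ D | f₁ y < x}.Finite)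
    (hadm₂ : (∀ u ∈ D, ∀ w ∈ D, max (f₂ u) (f₂ w) < f₂ (u + w)) ∧
      ∀ x : ℝ, {y ∈ D | f₂ y < x}.Finite)
    (A₁ A₂ : Set (Fin n → ℝ))
    (h₁ : IsFUlamSet D (Set.range v) f₁ A₁)
    (h₂ : IsFUlamSet D (Set.range v) f₂ A₂) :
    A₁ = A₂ :=
  stmt_5_general v D f₁ f₂ hadm₁ hadm₂ A₁ A₂ h₁ h₂
end

section
/- Let x : ℕ → {0,1,2} be a sequence, and define T(x) : ℕ → {0,1} by T(x)₀ = 1 if x₀ = 1 and T(x)₀ = 0 otherwise, and for i ≥ 1, T(x)ᵢ = 1 if xᵢ + T(x)ᵢ₋₁ = 1 and T(x)ᵢ = 0 otherwise. If x is eventually periodic with period p ≥ 1 (i.e., x_{j+p} = x_j for all sufficiently large j), then T(x) is eventually periodic with period p or 2p; in particular, T(x)_{j+2p} = T(x)_j for all sufficiently large j. -/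
/-!
Once `x` is `p`-periodic from `m` on, the recursion shows that `T(x)` is `q`-periodic from any
`j₀ ≥ m` with `T(x)_{j₀+q} = T(x)_{j₀}`, for `q` any multiple of `p`. Since `T(x)` takes only the
values `0` and `1`, two of `T(x)_m`, `T(x)_{m+p}`, `T(x)_{m+2p}` coincide, which gives period `p`
or `2p`.
-/

/-- The map `T` on sequences over `{0,1,2}`: `T(x)₀ = 1` iff `x₀ = 1`, and for `i ≥ 1`,
`T(x)ᵢ = 1` iff `xᵢ + T(x)ᵢ₋₁ = 1` (and `0` otherwise). -/
def Tmap (x : ℕ → ℕ) : ℕ → ℕ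
  | 0 => if x 0 = 1 then 1 else 0
  | i + 1 => if x (i + 1) + Tmap x i = 1 then 1 else 0

def PeriodicFrom {α : Type*} (y : ℕ → α) (M q : ℕ) : Prop :=
  ∀ j, M ≤ j → y (j + q) = y j

theorem PeriodicFrom.mul {α : Type*} {y : ℕ → α} {M q : ℕ} (h : PeriodicFrom y M q) (n : ℕ) :
    PeriodicFrom y M (n * q) := by
  induction n with
  | zero => simp [PeriodicFrom]
  | succ n ih =>
    intro j hj
    rw [Nat.succ_mul, ← add_assoc, h _ (by omega), ih j hj]

theorem Tmap_le_one (x : ℕ → ℕ) (i : ℕ) : Tmap x i ≤ 1 := by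
  cases i <;> simp only [Tmap] <;> split <;> simp

theorem Tmap_periodicFrom_of_eq {x : ℕ → ℕ} {m q j₀ : ℕ} (hx : PeriodicFrom x m q)
    (hj₀ : m ≤ j₀) (h : Tmap x (j₀ + q) = Tmap x j₀) : PeriodicFrom (Tmap x) j₀ q := by
  intro j hj
  induction j, hj using Nat.le_induction with
  | base => exact h
  | succ j hj ih =>
    rw [show j + 1 + q = j + q + 1 by omega]
    simp only [Tmap]
    rw [show j + q + 1 = j + 1 + q by omega, hx (j + 1) (by omega), ih]

theorem stmt_10_general (x : ℕ → ℕ) (p : ℕ)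
    (hper : ∃ m, ∀ j, m ≤ j → x (j + p) = x j) :
    ((∃ M, ∀ j, M ≤ j → Tmap x (j + p) = Tmap x j) ∨
      (∃ M, ∀ j, M ≤ j → Tmap x (j + 2 * p) = Tmap x j)) ∧
    (∃ M, ∀ j, M ≤ j → Tmap x (j + 2 * p) = Tmap x j) := by
  obtain ⟨m, hm⟩ := hper
  suffices h : (∃ M, PeriodicFrom (Tmap x) M p) ∨ ∃ M, PeriodicFrom (Tmap x) M (2 * p) by
    refine ⟨h, ?_⟩
    rcases h with ⟨M, hM⟩ | h
    exacts [⟨M, hM.mul 2⟩, h]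
  have h₀ := Tmap_le_one x m
  have h₁ := Tmap_le_one x (m + p)
  have h₂ := Tmap_le_one x (m + p + p)
  by_cases h01 : Tmap x (m + p) = Tmap x m
  · exact Or.inl ⟨m, Tmap_periodicFrom_of_eq hm le_rfl h01⟩
  by_cases h12 : Tmap x (m + p + p) = Tmap x (m + p)
  · exact Or.inl ⟨m + p, Tmap_periodicFrom_of_eq hm (Nat.le_add_right m p) h12⟩
  refine Or.inr ⟨m, Tmap_periodicFrom_of_eq (PeriodicFrom.mul hm 2) le_rfl ?_⟩
  rw [two_mul, ← add_assoc]
  omega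

theorem stmt_10 (x : ℕ → ℕ) (hx : ∀ i, x i ≤ 2) (p : ℕ) (hp : 1 ≤ p)
    (hper : ∃ m, ∀ j, m ≤ j → x (j + p) = x j) :
    ((∃ M, ∀ j, M ≤ j → Tmap x (j + p) = Tmap x j) ∨
      (∃ M, ∀ j, M ≤ j → Tmap x (j + 2 * p) = Tmap x j)) ∧
    (∃ M, ∀ j, M ≤ j → Tmap x (j + 2 * p) = Tmap x j) :=
  stmt_10_general x p hper
end

section
/- Let V be a finite set of nonzero vectors in ℝⁿ, all of whose coordinates are nonnegative, containing at least two elements. Then the Ulam set A(V) is infinite. -/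
/-! If `A` were finite, let `u > w` be its two largest elements (in a linear order compatible
with addition). Any other pair of distinct elements of `A` sums to at most `2w < u + w`, so
`{u, w}` is the only representation of `u + w`; and `u + w > u` because `w` dominates a positive
element of `V`. Hence `u + w` would be a new element of `A` beyond its maximum. For vectors with
nonnegative coordinates the lexicographic order is such an order. -/

theorem Set.Finite.exists_lt_forall_ne_le {α : Type*} [LinearOrder α] {A : Set α}
    (hfin : A.Finite) (hA : A.Nontrivial) :
    ∃ u ∈ A, ∃ w ∈ A, w < u ∧ ∀ y ∈ A, y ≠ u → y ≤ w := by
  obtain ⟨u, huA, hu⟩ := A.exists_max_image id hfin hA.nonempty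
  obtain ⟨w, ⟨hwA, hwu⟩, hw⟩ := (A \ {u}).exists_max_image id hfin.sdiff (hA.exists_ne u)
  exact ⟨u, huA, w, hwA, lt_of_le_of_ne (hu w hwA) hwu, fun y hyA hyu => hw y ⟨hyA, hyu⟩⟩

section OrderedMonoid

variable {α : Type*} [AddCommMonoid α] [LinearOrder α] [IsOrderedCancelAddMonoid α]

theorem ulamUniqueRep_add_of_forall_ne_le {A : Set α} {u w : α} (hu : u ∈ A) (hw : w ∈ A)
    (hwu : w < u) (htop : ∀ y ∈ A, y ≠ u → y ≤ w) : UlamUniqueRep A (u + w) := by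
  refine ⟨u, w, hu, hw, hwu.ne', rfl, fun u' w' hu' hw' _ hsum => ?_⟩
  by_cases hu'u : u' = u
  · subst hu'u
    exact .inl ⟨rfl, add_left_cancel hsum⟩
  by_cases hw'u : w' = u
  · subst hw'u
    exact .inr ⟨add_left_cancel (by rwa [add_comm] at hsum), rfl⟩
  have : u' + w' < u + w := calc
    u' + w' ≤ w + w := add_le_add (htop u' hu' hu'u) (htop w' hw' hw'u)
    _ < u + w := add_lt_add_left hwu w
  exact absurd hsum this.ne

theorem IsUlamSet.infinite {V A : Set α} (hpos : ∀ v ∈ V, 0 < v) (hV : V.Nontrivial)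
    (hA : IsUlamSet V A) : A.Infinite := by
  intro hfin
  obtain ⟨u, hu, w, hw, hwu, htop⟩ := hfin.exists_lt_forall_ne_le (hV.mono hA.1)
  have hmax : ∀ y ∈ A, y ≤ u := fun y hy =>
    if h : y = u then h.le else (htop y hy h).trans hwu.le
  obtain ⟨v, hv, hvu⟩ := hV.exists_ne u
  have hu_lt : u < u + w := lt_add_of_pos_right u ((hpos v hv).trans_le (htop v (hA.1 hv) hvu))
  have hnotA : u + w ∉ A := fun h => (hmax _ h).not_gt hu_lt
  have hnotV : u + w ∉ V := fun h => hnotA (hA.1 h)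
  exact hnotA ((hA.2 _ hnotV).2 (ulamUniqueRep_add_of_forall_ne_le hu hw hwu htop))

end OrderedMonoid

theorem stmt_14_general {n : ℕ} (V : Set (Fin n → ℝ))
    (hV : ∀ v ∈ V, v ≠ 0 ∧ ∀ i, 0 ≤ v i)
    (hcard : V.Nontrivial)
    (A : Set (Fin n → ℝ)) (hA : IsUlamSet V A) :
    A.Infinite := by
  have hpos : ∀ v ∈ V, (0 : Lex (Fin n → ℝ)) < toLex v := fun v hv =>
    Pi.lex_lt_of_lt wellFounded_lt (lt_of_le_of_ne (hV v hv).2 (hV v hv).1.symm)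
  exact IsUlamSet.infinite (α := Lex (Fin n → ℝ)) hpos hcard hA

theorem stmt_14 {n : ℕ} (V : Set (Fin n → ℝ)) (hfin : V.Finite)
    (hV : ∀ v ∈ V, v ≠ 0 ∧ ∀ i, 0 ≤ v i)
    (hcard : V.Nontrivial)
    (A : Set (Fin n → ℝ)) (hA : IsUlamSet V A) :
    A.Infinite :=
  stmt_14_general V hV hcard A hA
end
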